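/- arXiv:1107.2406 — 5 statements merged into one kernel-verified Lean document; each statement's English description precedes it below -/
import Mathlib

section
/- Let N ≥ 1 and let P₀,...,P_N be polynomials over a field K with P_n(0) = p_{n,0}, and let a = ∑ a_k z^k be a formal power series with constant term a₀ = f₀. If C := ∑_{n=1}^N n · p_{n,0} · f₀^{n-1} ≠ 0, then the map sending a to the formal power series ∑_{n=0}^N P_n · aⁿ has the property that the coefficient of z^J in ∑_{n=0}^N P_n · aⁿ equals C · a_J + D_J, where D_J depends only on a₀,...,a_{J-1} (i.e., D_J is the coefficient of z^J of ∑_{n=0}^N P_n · (truncation of a below degree J)ⁿ). -/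
/-!
Write `t` for the truncation of `a` below degree `J`. Since `X ^ J` divides `a - t`, it divides
`aⁿ - tⁿ = (∑ i < n, aⁱ tⁿ⁻¹⁻ⁱ) (a - t)`, and the `J`-th coefficient of `f * X ^ J * s` is
`f(0) s(0)`. As `a` and `t` share the constant term `f₀` when `J ≥ 1`, the geometric sum has
constant term `n f₀ⁿ⁻¹`, while `s(0) = a_J` because `t` has no `z^J` term.
Summing over `n` gives `C a_J`.
-/

open PowerSeries Finset

namespace PowerSeries

variable {R : Type*} [CommRing R]

theorem X_pow_dvd_sub_trunc (J : ℕ) (a : R⟦X⟧) : X ^ J ∣ a - (a.trunc J : R⟦X⟧) :=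
  ⟨_, sub_eq_of_eq_add (eq_X_pow_mul_shift_add_trunc J a)⟩

theorem coeff_mul_of_X_pow_dvd {f d : R⟦X⟧} {J : ℕ} (hd : X ^ J ∣ d) :
    coeff J (f * d) = constantCoeff f * coeff J d := by
  obtain ⟨s, rfl⟩ := hd
  simp [mul_left_comm f, coeff_X_pow_mul']

theorem coeff_mul_pow_sub_coeff_mul_pow {a b : R⟦X⟧} {J : ℕ} (hab : X ^ J ∣ a - b)
    (h₀ : constantCoeff a = constantCoeff b) (p : R⟦X⟧) (n : ℕ) :
    coeff J (p * a ^ n) - coeff J (p * b ^ n) =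
      n * constantCoeff p * constantCoeff a ^ (n - 1) * coeff J (a - b) := by
  rw [← map_sub, ← mul_sub, ← geom_sum₂_mul, ← mul_assoc, coeff_mul_of_X_pow_dvd hab, map_mul,
    RingHom.map_geom_sum₂, h₀, geom_sum₂_self]
  ring

theorem coeff_mul_pow_eq_add_coeff_mul_trunc_pow {J : ℕ} (hJ : 0 < J) (p a : R⟦X⟧) (n : ℕ) :
    coeff J (p * a ^ n) =
      n * constantCoeff p * constantCoeff a ^ (n - 1) * coeff J a +
        coeff J (p * (a.trunc J : R⟦X⟧) ^ n) := by
  have h₀ : constantCoeff a = constantCoeff (a.trunc J : R⟦X⟧) := by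
    simp only [← coeff_zero_eq_constantCoeff_apply, coeff_coe_trunc_of_lt hJ]
  have h_J : coeff J (a.trunc J : R⟦X⟧) = 0 := by simp [Polynomial.coeff_coe, coeff_trunc]
  rw [← sub_eq_iff_eq_add, coeff_mul_pow_sub_coeff_mul_pow (X_pow_dvd_sub_trunc J a) h₀,
    map_sub, h_J, sub_zero]

end PowerSeries

theorem coeff_decomposition_general (K : Type*) [Field K] (N : ℕ)
    (P : ℕ → Polynomial K) (a : PowerSeries K) (f₀ : K)
    (ha0 : PowerSeries.constantCoeff a = f₀)
    (C : K) (hC : C = ∑ n ∈ Finset.range (N + 1), (n : K) * (P n).coeff 0 * f₀ ^ (n - 1))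
    (J : ℕ) (hJ : 1 ≤ J) :
    PowerSeries.coeff J (∑ n ∈ Finset.range (N + 1), (P n : PowerSeries K) * a ^ n) =
      C * PowerSeries.coeff J a +
        PowerSeries.coeff J
          (∑ n ∈ Finset.range (N + 1),
            (P n : PowerSeries K) * ((a.trunc J : Polynomial K) : PowerSeries K) ^ n) := by
  subst ha0 hC
  rw [map_sum, map_sum, sum_mul, ← sum_add_distrib]
  refine sum_congr rfl fun n _ => ?_
  rw [coeff_mul_pow_eq_add_coeff_mul_trunc_pow hJ, Polynomial.constantCoeff_coe]

theorem coeff_decomposition (K : Type*) [Field K] (N : ℕ) (hN : 1 ≤ N)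
    (P : ℕ → Polynomial K) (a : PowerSeries K) (f₀ : K)
    (ha0 : PowerSeries.constantCoeff a = f₀)
    (C : K) (hC : C = ∑ n ∈ Finset.range (N + 1), (n : K) * (P n).coeff 0 * f₀ ^ (n - 1))
    (hCne : C ≠ 0) (J : ℕ) (hJ : 1 ≤ J) :
    PowerSeries.coeff J (∑ n ∈ Finset.range (N + 1), (P n : PowerSeries K) * a ^ n) =
      C * PowerSeries.coeff J a +
        PowerSeries.coeff J
          (∑ n ∈ Finset.range (N + 1),
            (P n : PowerSeries K) * ((a.trunc J : Polynomial K) : PowerSeries K) ^ n) :=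
  coeff_decomposition_general K N P a f₀ ha0 C hC J hJ
end

section
/- Let N ≥ 1, let P₀,...,P_N ∈ K[z] and let f ∈ K⟦z⟧ satisfy the order condition ∑_{n=0}^N P_n fⁿ ≡ 0 mod z^M for some M. Suppose C := ∑_{n=1}^N n P_n(0) f(0)^{n-1} ≠ 0, and let a ∈ K⟦z⟧ be the unique power series root of ∑_{n=0}^N P_n Yⁿ = 0 with a(0) = f(0). Then a ≡ f mod z^M, i.e., the coefficients of a agree with those of f up to order M−1. -/
/-!
Put `H := ∑ₙ Pₙ · (aⁿ - fⁿ)/(a - f) = ∑ₙ Pₙ ∑_{i<n} aⁱ f^(n-1-i)`. Then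
`H · (a - f) = ∑ Pₙ aⁿ - ∑ Pₙ fⁿ ≡ 0 mod z^M`, and since `a(0) = f(0)` the constant coefficient
of `H` is `C ≠ 0`, so `H` is a unit of `K⟦z⟧` and `a ≡ f mod z^M`.
-/

open Finset PowerSeries

section DifferenceQuotient

variable {R S : Type*} [CommRing R] [CommRing S]

def powerSumDiffQuotient (s : Finset ℕ) (c : ℕ → R) (a b : R) : R :=
  ∑ n ∈ s, c n * ∑ i ∈ range n, a ^ i * b ^ (n - 1 - i)

theorem powerSumDiffQuotient_mul_sub (s : Finset ℕ) (c : ℕ → R) (a b : R) :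
    powerSumDiffQuotient s c a b * (a - b) = ∑ n ∈ s, c n * a ^ n - ∑ n ∈ s, c n * b ^ n := by
  rw [powerSumDiffQuotient, sum_mul, ← sum_sub_distrib]
  exact sum_congr rfl fun n _ => by rw [mul_assoc, geom_sum₂_mul, mul_sub]

theorem map_powerSumDiffQuotient (φ : R →+* S) (s : Finset ℕ) (c : ℕ → R) {a b : R}
    (h : φ a = φ b) :
    φ (powerSumDiffQuotient s c a b) = ∑ n ∈ s, (n : S) * φ (c n) * φ b ^ (n - 1) := by
  simp only [powerSumDiffQuotient, map_sum, map_mul, map_pow, h, geom_sum₂_self]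
  exact sum_congr rfl fun n _ => by ring

end DifferenceQuotient

theorem approximant_agrees_with_f_general (K : Type*) [Field K] (N : ℕ)
    (P : ℕ → Polynomial K) (f : PowerSeries K) (M : ℕ)
    (horder : ∀ m < M, PowerSeries.coeff m
      (∑ n ∈ Finset.range (N + 1), (P n : PowerSeries K) * f ^ n) = 0)
    (hC : ∑ n ∈ Finset.range (N + 1),
      (n : K) * (P n).coeff 0 * (PowerSeries.constantCoeff f) ^ (n - 1) ≠ 0)
    (a : PowerSeries K)
    (ha0 : PowerSeries.constantCoeff a = PowerSeries.constantCoeff f)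
    (ha : ∑ n ∈ Finset.range (N + 1), (P n : PowerSeries K) * a ^ n = 0) :
    ∀ m < M, PowerSeries.coeff m a = PowerSeries.coeff m f := by
  set H := powerSumDiffQuotient (range (N + 1)) (fun n ↦ (P n : PowerSeries K)) a f
  have hH : IsUnit H := by
    rw [isUnit_iff_constantCoeff, map_powerSumDiffQuotient _ _ _ ha0]
    simpa only [Polynomial.constantCoeff_coe] using hC.isUnit
  have hdvd : X ^ M ∣ H * (a - f) := by
    rw [powerSumDiffQuotient_mul_sub, ha, zero_sub, dvd_neg]
    exact X_pow_dvd_iff.mpr horder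
  intro m hm
  rw [← sub_eq_zero, ← map_sub]
  exact X_pow_dvd_iff.mp ((hH.dvd_mul_left).mp hdvd) m hm

theorem approximant_agrees_with_f (K : Type*) [Field K] (N : ℕ) (hN : 1 ≤ N)
    (P : ℕ → Polynomial K) (f : PowerSeries K) (M : ℕ)
    (horder : ∀ m < M, PowerSeries.coeff m
      (∑ n ∈ Finset.range (N + 1), (P n : PowerSeries K) * f ^ n) = 0)
    (hC : ∑ n ∈ Finset.range (N + 1),
      (n : K) * (P n).coeff 0 * (PowerSeries.constantCoeff f) ^ (n - 1) ≠ 0)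
    (a : PowerSeries K)
    (ha0 : PowerSeries.constantCoeff a = PowerSeries.constantCoeff f)
    (ha : ∑ n ∈ Finset.range (N + 1), (P n : PowerSeries K) * a ^ n = 0) :
    ∀ m < M, PowerSeries.coeff m a = PowerSeries.coeff m f :=
  approximant_agrees_with_f_general K N P f M horder hC a ha0 ha
end

section
/- Let P₁, P₂ be polynomials over K with coefficients p_{1,0}, p_{1,1} and p_{2,0}, p_{2,1} (degree ≤ 1), and let a ∈ K⟦z⟧ satisfy P₀ + P₁ a + P₂ a² = 0 where deg P₀ ≤ 1. Assume p_{1,0} + 2 p_{2,0} a₀ ≠ 0. Then for every J ≥ 2, a_J = −( p_{1,1} a_{J−1} + p_{2,1} ∑_{k=0}^{J−1} a_{J−1−k} a_k + p_{2,0} ∑_{k=1}^{J−1} a_k a_{J−k} ) / ( p_{1,0} + 2 p_{2,0} a₀ ). -/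
/-!
Since `P₀` has degree at most one, the coefficient of `z ^ J` (`J ≥ 2`) in
`P₀ + P₁ a + P₂ a²` involves only `P₁` and `P₂`. Each of these, being linear, contributes
`p_{i,0}` times the `J`-th and `p_{i,1}` times the `(J - 1)`-th coefficient of `a` resp. `a²`.
In the `J`-th coefficient of `a²` the unknown `a_J` occurs only through the two boundary terms
`a₀ a_J + a_J a₀`, so the vanishing coefficient is a linear equation for `a_J` with leading
coefficient `p_{1,0} + 2 p_{2,0} a₀`.
-/

open PowerSeries Finset

namespace PowerSeries

variable {R : Type*} [CommSemiring R]

theorem coeff_succ_coe_mul_of_natDegree_le_one {P : Polynomial R} (hP : P.natDegree ≤ 1)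
    (f : PowerSeries R) (n : ℕ) :
    coeff (n + 1) ((P : PowerSeries R) * f) =
      P.coeff 0 * coeff (n + 1) f + P.coeff 1 * coeff n f := by
  rw [Polynomial.eq_X_add_C_of_natDegree_le_one hP]
  simp only [Polynomial.coe_add, Polynomial.coe_mul, Polynomial.coe_C, Polynomial.coe_X, add_mul,
    mul_assoc, map_add, coeff_C_mul, coeff_succ_X_mul, Polynomial.coeff_add,
    Polynomial.mul_coeff_zero, Polynomial.coeff_C_zero, Polynomial.coeff_X_zero, mul_zero,
    zero_add, Polynomial.coeff_mul_X, Polynomial.coeff_C_succ, add_zero]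
  ring

theorem coeff_sq_eq_sum_range (f : PowerSeries R) (n : ℕ) :
    coeff n (f ^ 2) = ∑ k ∈ range (n + 1), coeff (n - k) f * coeff k f := by
  rw [sq, coeff_mul, Nat.sum_antidiagonal_eq_sum_range_succ fun i j => coeff i f * coeff j f]
  exact sum_congr rfl fun k _ => mul_comm _ _

theorem coeff_succ_sq (f : PowerSeries R) (n : ℕ) :
    coeff (n + 1) (f ^ 2) =
      2 * coeff 0 f * coeff (n + 1) f + ∑ k ∈ Icc 1 n, coeff k f * coeff (n + 1 - k) f := by
  rw [sq, coeff_mul, Nat.sum_antidiagonal_eq_sum_range_succ fun i j => coeff i f * coeff j f,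
    sum_range_succ, sum_range_succ', ← Ico_add_one_right_eq_Icc, sum_Ico_eq_sum_range]
  simp only [Nat.sub_self, Nat.sub_zero, Nat.add_sub_cancel, add_comm 1]
  ring

end PowerSeries

theorem quadratic_recursion (K : Type*) [Field K]
    (P₀ P₁ P₂ : Polynomial K)
    (h0 : P₀.natDegree ≤ 1) (h1 : P₁.natDegree ≤ 1) (h2 : P₂.natDegree ≤ 1)
    (a : PowerSeries K)
    (ha : (P₀ : PowerSeries K) + (P₁ : PowerSeries K) * a + (P₂ : PowerSeries K) * a ^ 2 = 0)
    (hden : P₁.coeff 0 + 2 * P₂.coeff 0 * PowerSeries.coeff 0 a ≠ 0) :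
    ∀ J, 2 ≤ J → PowerSeries.coeff J a =
      -(P₁.coeff 1 * PowerSeries.coeff (J - 1) a +
          P₂.coeff 1 * ∑ k ∈ Finset.range J,
            PowerSeries.coeff (J - 1 - k) a * PowerSeries.coeff k a +
          P₂.coeff 0 * ∑ k ∈ Finset.Icc 1 (J - 1),
            PowerSeries.coeff k a * PowerSeries.coeff (J - k) a) /
        (P₁.coeff 0 + 2 * P₂.coeff 0 * PowerSeries.coeff 0 a) := by
  intro J hJ
  obtain ⟨n, rfl⟩ : ∃ n, J = n + 1 := ⟨J - 1, by omega⟩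
  have hP₀ : coeff (n + 1) (P₀ : PowerSeries K) = 0 := by
    rw [Polynomial.coeff_coe]
    exact Polynomial.coeff_eq_zero_of_natDegree_lt (by omega)
  have hcoeff := congrArg (coeff (n + 1)) ha
  rw [map_add, map_add, map_zero, hP₀, coeff_succ_coe_mul_of_natDegree_le_one h1,
    coeff_succ_coe_mul_of_natDegree_le_one h2, coeff_succ_sq, coeff_sq_eq_sum_range] at hcoeff
  rw [Nat.add_sub_cancel, eq_div_iff hden]
  linear_combination hcoeff
end

section
/- Let a, b ∈ K⟦z⟧ both satisfy ∑_{n=0}^N P_n aⁿ = 0 and ∑_{n=0}^N P_n bⁿ = 0 with a(0) = b(0) = f₀, where C := ∑_{n=1}^N n P_n(0) f₀^{n-1} ≠ 0. Then a = b. -/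
/-!
Subtracting the two equations gives `(a - b) * G = 0`, where `G` is the divided difference
`∑ P_n (aⁿ - bⁿ) / (a - b) = ∑ P_n ∑_{i<n} aⁱ bⁿ⁻¹⁻ⁱ`. Since `a` and `b` share the constant
term `f₀`, the constant term of `G` is `C ≠ 0`; hence `G ≠ 0` and, `K⟦z⟧` being a domain, `a = b`.
-/

open Finset

section DivDiff

variable {R S : Type*} [CommRing R] [CommRing S]

/-- The divided difference `(p(x) - p(y)) / (x - y)` of `p(t) = ∑_{n ∈ s} cₙ tⁿ`. -/
def divDiff (s : Finset ℕ) (c : ℕ → R) (x y : R) : R :=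
  ∑ n ∈ s, c n * ∑ i ∈ range n, x ^ i * y ^ (n - 1 - i)

theorem sum_mul_pow_sub_sum_mul_pow (s : Finset ℕ) (c : ℕ → R) (x y : R) :
    ∑ n ∈ s, c n * x ^ n - ∑ n ∈ s, c n * y ^ n = divDiff s c x y * (x - y) := by
  simp only [divDiff, sum_mul, ← sum_sub_distrib, ← mul_sub]
  exact sum_congr rfl fun n _ => by rw [mul_assoc, geom_sum₂_mul]

theorem map_divDiff (φ : R →+* S) (s : Finset ℕ) (c : ℕ → R) (x y : R) :
    φ (divDiff s c x y) = divDiff s (φ ∘ c) (φ x) (φ y) := by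
  simp only [divDiff, map_sum, map_mul, map_pow, Function.comp_apply]

theorem divDiff_self (s : Finset ℕ) (c : ℕ → R) (x : R) :
    divDiff s c x x = ∑ n ∈ s, (n : R) * c n * x ^ (n - 1) := by
  simp only [divDiff, geom_sum₂_self, mul_left_comm, mul_assoc]

theorem eq_of_sum_mul_pow_eq [IsDomain R] {s : Finset ℕ} {c : ℕ → R} {x y : R}
    (h : ∑ n ∈ s, c n * x ^ n = ∑ n ∈ s, c n * y ^ n) (hxy : divDiff s c x y ≠ 0) :
    x = y := by
  rw [← sub_eq_zero, sum_mul_pow_sub_sum_mul_pow, mul_eq_zero] at h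
  exact sub_eq_zero.mp (h.resolve_left hxy)

end DivDiff

theorem root_uniqueness (K : Type*) [Field K] (N : ℕ)
    (P : ℕ → Polynomial K) (f₀ : K) (a b : PowerSeries K)
    (ha : ∑ n ∈ Finset.range (N + 1), (P n : PowerSeries K) * a ^ n = 0)
    (hb : ∑ n ∈ Finset.range (N + 1), (P n : PowerSeries K) * b ^ n = 0)
    (ha0 : PowerSeries.constantCoeff a = f₀)
    (hb0 : PowerSeries.constantCoeff b = f₀)
    (hC : ∑ n ∈ Finset.range (N + 1), (n : K) * (P n).coeff 0 * f₀ ^ (n - 1) ≠ 0) :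
    a = b := by
  refine eq_of_sum_mul_pow_eq (ha.trans hb.symm) fun hG => hC ?_
  have hG0 := congrArg PowerSeries.constantCoeff hG
  rwa [map_divDiff, ha0, hb0, divDiff_self, map_zero] at hG0
end

section
/- Let N ≥ 1, P₀,...,P_N ∈ K[z] with C := ∑_{n=1}^N n P_n(0) f₀^{n-1} ≠ 0 and ∑_{n=0}^N P_n(0) f₀ⁿ = 0. Define the sequence (a_J) by a₀ = f₀ and, for J ≥ 1, a_J = −D_J/C where D_J is the coefficient of z^J in ∑_{n=0}^N P_n (∑_{j=0}^{J-1} a_j z^j)ⁿ. Then the power series a = ∑ a_J z^J satisfies ∑_{n=0}^N P_n aⁿ = 0. -/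
/-!
Write `F(y) = ∑ Pₙ yⁿ`. If `A` agrees with the truncation `t = a₀ + ⋯ + a_{J-1} z^{J-1}` up to
order `J`, i.e. `A = t + z^J B` with `B(0) = a_J`, then `(t + z^J B)ⁿ ≡ tⁿ + n tⁿ⁻¹ z^J B` modulo
`z^{2J}`, so the coefficient of `z^J` in `F(A)` is `[z^J] F(t) + F_y(0, f₀) a_J = D_J + C a_J`.
The recursion makes this vanish for `J ≥ 1`, and the constant term `F(0, f₀)` vanishes by
assumption.
-/

open PowerSeries Finset

namespace PowerSeries

variable {R : Type*} [CommRing R]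

theorem trunc_add_X_pow_mul_mk (n : ℕ) (φ : R⟦X⟧) :
    (trunc n φ : R⟦X⟧) + X ^ n * mk (fun k ↦ coeff (n + k) φ) = φ := by
  ext m
  rw [map_add, coeff_X_pow_mul', Polynomial.coeff_coe, coeff_trunc, coeff_mk]
  by_cases h : m < n
  · simp [h, Nat.not_le_of_lt h]
  · simp [h, Nat.add_sub_cancel' (Nat.le_of_not_lt h)]

theorem constantCoeff_trunc {n : ℕ} (hn : n ≠ 0) (φ : R⟦X⟧) :
    constantCoeff (trunc n φ : R⟦X⟧) = constantCoeff φ := by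
  rw [Polynomial.constantCoeff_coe, coeff_trunc, if_pos (Nat.pos_of_ne_zero hn),
    coeff_zero_eq_constantCoeff]

theorem trunc_eq_sum_range (n : ℕ) (φ : R⟦X⟧) :
    trunc n φ = ∑ i ∈ range n, Polynomial.C (coeff i φ) * Polynomial.X ^ i := by
  rw [← eval₂_trunc_eq_sum_range, Polynomial.eval₂_C_X]

theorem coeff_mul_add_X_pow_mul_pow {J : ℕ} (hJ : J ≠ 0) (Q t B : R⟦X⟧) (n : ℕ) :
    coeff J (Q * (t + X ^ J * B) ^ n) = coeff J (Q * t ^ n) +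
      n * constantCoeff Q * constantCoeff t ^ (n - 1) * constantCoeff B := by
  obtain ⟨r, hr⟩ := sq_dvd_add_pow_sub_sub (X ^ J * B) t n
  have hexp : Q * (t + X ^ J * B) ^ n =
      Q * t ^ n + X ^ J * ((n : R⟦X⟧) * Q * t ^ (n - 1) * B) + X ^ (J + J) * (Q * B ^ 2 * r) := by
    linear_combination Q * hr
  have hlin : coeff J (X ^ J * ((n : R⟦X⟧) * Q * t ^ (n - 1) * B)) =
      n * constantCoeff Q * constantCoeff t ^ (n - 1) * constantCoeff B := by
    simpa [coeff_zero_eq_constantCoeff] using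
      coeff_X_pow_mul ((n : R⟦X⟧) * Q * t ^ (n - 1) * B) J 0
  have hquad : coeff J (X ^ (J + J) * (Q * B ^ 2 * r)) = 0 := by
    rw [coeff_X_pow_mul', if_neg (by omega)]
  rw [hexp, map_add, map_add, hlin, hquad, add_zero]

theorem coeff_sum_mul_add_X_pow_mul_pow {J : ℕ} (hJ : J ≠ 0) (s : Finset ℕ) (Q : ℕ → R⟦X⟧)
    (t B : R⟦X⟧) :
    coeff J (∑ n ∈ s, Q n * (t + X ^ J * B) ^ n) = coeff J (∑ n ∈ s, Q n * t ^ n) +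
      (∑ n ∈ s, n * constantCoeff (Q n) * constantCoeff t ^ (n - 1)) * constantCoeff B := by
  simp only [map_sum, coeff_mul_add_X_pow_mul_pow hJ, sum_add_distrib, sum_mul]

end PowerSeries

theorem recursion_correctness_general (K : Type*) [Field K] (N : ℕ)
    (P : ℕ → Polynomial K) (f₀ : K) (C : K)
    (hC : C = ∑ n ∈ Finset.range (N + 1), (n : K) * (P n).coeff 0 * f₀ ^ (n - 1))
    (hCne : C ≠ 0)
    (hroot : ∑ n ∈ Finset.range (N + 1), (P n).coeff 0 * f₀ ^ n = 0)
    (a : ℕ → K) (ha0 : a 0 = f₀)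
    (harec : ∀ J, 1 ≤ J → a J =
      -(PowerSeries.coeff J
          (∑ n ∈ Finset.range (N + 1), (P n : PowerSeries K) *
            ((∑ j ∈ Finset.range J, Polynomial.C (a j) * Polynomial.X ^ j :
              Polynomial K) : PowerSeries K) ^ n)) / C) :
    ∑ n ∈ Finset.range (N + 1), (P n : PowerSeries K) * (PowerSeries.mk a) ^ n = 0 := by
  ext J
  rw [map_zero]
  rcases eq_or_ne J 0 with rfl | hJ
  · simpa [ha0] using hroot
  have htrunc : ∑ j ∈ range J, Polynomial.C (a j) * Polynomial.X ^ j = trunc J (mk a) := by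
    simp only [trunc_eq_sum_range, coeff_mk]
  rw [← trunc_add_X_pow_mul_mk J (mk a), coeff_sum_mul_add_X_pow_mul_pow hJ]
  simp only [constantCoeff_trunc hJ, Polynomial.constantCoeff_coe, constantCoeff_mk, coeff_mk,
    add_zero, ha0, ← hC]
  rw [harec J (Nat.one_le_iff_ne_zero.mpr hJ), htrunc, mul_div_cancel₀ _ hCne, add_neg_cancel]

theorem recursion_correctness (K : Type*) [Field K] (N : ℕ) (hN : 1 ≤ N)
    (P : ℕ → Polynomial K) (f₀ : K) (C : K)
    (hC : C = ∑ n ∈ Finset.range (N + 1), (n : K) * (P n).coeff 0 * f₀ ^ (n - 1))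
    (hCne : C ≠ 0)
    (hroot : ∑ n ∈ Finset.range (N + 1), (P n).coeff 0 * f₀ ^ n = 0)
    (a : ℕ → K) (ha0 : a 0 = f₀)
    (harec : ∀ J, 1 ≤ J → a J =
      -(PowerSeries.coeff J
          (∑ n ∈ Finset.range (N + 1), (P n : PowerSeries K) *
            ((∑ j ∈ Finset.range J, Polynomial.C (a j) * Polynomial.X ^ j :
              Polynomial K) : PowerSeries K) ^ n)) / C) :
    ∑ n ∈ Finset.range (N + 1), (P n : PowerSeries K) * (PowerSeries.mk a) ^ n = 0 :=
  recursion_correctness_general K N P f₀ C hC hCne hroot a ha0 harec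
end
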